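/- Let k ≥ 1 be an integer and let G be a properly edge-colored graph with |V(G)| ≥ 8k and average color degree d̂(G) ≥ 2k. Then G contains a rainbow matching of size k. -/

import Mathlib

/-- The color degree of a vertex `v`: the number of distinct colors appearing
on edges of `G` incident to `v`. -/
noncomputable def colorDegree {V : Type*} (G : SimpleGraph V) (c : Sym2 V → ℕ) (v : V) : ℕ :=
  (c '' {e : Sym2 V | e ∈ G.edgeSet ∧ v ∈ e}).ncard

/-- `M` is a rainbow matching in the edge-colored graph `(G, c)`:
a set of edges of `G`, pairwise vertex-disjoint, with pairwise distinct colors. -/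
def IsRainbowMatching {V : Type*} (G : SimpleGraph V) (c : Sym2 V → ℕ)
    (M : Finset (Sym2 V)) : Prop :=
  ↑M ⊆ G.edgeSet ∧
  (∀ e ∈ M, ∀ f ∈ M, e ≠ f → ∀ v : V, v ∈ e → v ∉ f) ∧
  Set.InjOn c ↑M

/-!
Take a maximum rainbow matching `M`, with `m < k` edges, and let `U` be the set of vertices it
misses. An edge inside `U` carries a color of `M` (otherwise it extends `M`), so by properness a
vertex of `U` has at most `m` neighbours in `U`. Call a neighbour `w ∈ U` of a vertex `x` of `M`
fresh if the color of `xw` is not used by `M`. For an edge `xy` of `M`, fresh edges `xu` and `yw`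
with `u ≠ w` have equal colors (otherwise swap `xy` for them), so if both ends have fresh
neighbours, each has at most two. Call an edge of `M` rich if an end `x` has at least four fresh
neighbours; its mate `y` then has none. Exchanging one or two edges of `M` shows that the colors
of rich edges occur neither inside `U` nor on edges from `y` to `U`. These bounds on degrees into
`U` give a degree sum below `2(m + 1)n` once `n ≥ 8(m + 1)`; as the coloring is proper, color
degrees are degrees, contradicting the average color degree `≥ 2k`.
-/

open Finset

section

variable {V : Type*} {G : SimpleGraph V} {c : Sym2 V → ℕ}

def IsProperEdgeColoring (G : SimpleGraph V) (c : Sym2 V → ℕ) : Prop :=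
  ∀ e ∈ G.edgeSet, ∀ f ∈ G.edgeSet, e ≠ f → (∃ v : V, v ∈ e ∧ v ∈ f) → c e ≠ c f

namespace IsProperEdgeColoring

theorem injOn_neighborSet (hc : IsProperEdgeColoring G c) (v : V) :
    Set.InjOn (fun w => c s(v, w)) (G.neighborSet v) := by
  intro w₁ h₁ w₂ h₂ heq
  by_contra hne
  exact hc _ h₁ _ h₂ (fun h => hne (Sym2.congr_right.1 h))
    ⟨v, Sym2.mem_mk_left _ _, Sym2.mem_mk_left _ _⟩ heq

theorem card_le_card_of_forall_color_mem (hc : IsProperEdgeColoring G c) {v : V} {s : Finset V}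
    {C : Finset ℕ} (hadj : ∀ w ∈ s, G.Adj v w) (hC : ∀ w ∈ s, c s(v, w) ∈ C) : #s ≤ #C :=
  card_le_card_of_injOn _ hC ((hc.injOn_neighborSet v).mono hadj)

theorem colorDegree_eq_degree (hc : IsProperEdgeColoring G c) (v : V)
    [Fintype (G.neighborSet v)] : colorDegree G c v = G.degree v := by
  have : c '' G.incidenceSet v = (fun w => c s(v, w)) '' G.neighborSet v := by
    ext; simp [SimpleGraph.incidenceSet, Sym2.mem_iff_exists]
  rw [colorDegree, show {e | e ∈ G.edgeSet ∧ v ∈ e} = G.incidenceSet v from rfl, this,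
    (hc.injOn_neighborSet v).ncard_image, ← SimpleGraph.card_neighborFinset_eq_degree,
    ← Set.ncard_coe_finset, SimpleGraph.coe_neighborFinset]

end IsProperEdgeColoring

namespace IsRainbowMatching

theorem mono {M N : Finset (Sym2 V)} (hM : IsRainbowMatching G c M) (hNM : N ⊆ M) :
    IsRainbowMatching G c N :=
  ⟨(coe_subset.2 hNM).trans hM.1, fun e he f hf => hM.2.1 e (hNM he) f (hNM hf),
    hM.2.2.mono (coe_subset.2 hNM)⟩

theorem singleton {a b : V} (hab : G.Adj a b) : IsRainbowMatching G c {s(a, b)} :=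
  ⟨by simpa using hab, by simp, by simp⟩

end IsRainbowMatching

def IsMaxRainbowMatching (G : SimpleGraph V) (c : Sym2 V → ℕ) (M : Finset (Sym2 V)) : Prop :=
  IsRainbowMatching G c M ∧ ∀ N, IsRainbowMatching G c N → #N ≤ #M

theorem exists_isMaxRainbowMatching [Finite V] (G : SimpleGraph V) (c : Sym2 V → ℕ) :
    ∃ M, IsMaxRainbowMatching G c M := by
  classical
  have := Fintype.ofFinite V
  obtain ⟨M, hM, hmax⟩ := exists_max_image {M | IsRainbowMatching G c M} card
    ⟨∅, mem_filter.2 ⟨mem_univ _, by simp [IsRainbowMatching]⟩⟩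
  exact ⟨M, (mem_filter.1 hM).2, fun N hN => hmax N (by simpa using hN)⟩

variable [DecidableEq V] {M : Finset (Sym2 V)} {x y : V}

namespace IsRainbowMatching

theorem union {N : Finset (Sym2 V)} (hM : IsRainbowMatching G c M)
    (hN : IsRainbowMatching G c N) (hv : ∀ e ∈ M, ∀ v ∈ e, ∀ f ∈ N, v ∉ f)
    (hc : ∀ e ∈ M, ∀ f ∈ N, c e ≠ c f) : IsRainbowMatching G c (M ∪ N) := by
  refine ⟨by simpa using And.intro hM.1 hN.1, ?_, ?_⟩
  · simp only [mem_union]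
    rintro e (he | he) f (hf | hf) hef v hve
    · exact hM.2.1 e he f hf hef v hve
    · exact hv e he v hve f hf
    · exact fun hvf => hv f hf v hvf e he hve
    · exact hN.2.1 e he f hf hef v hve
  · simp only [coe_union, Set.InjOn, Set.mem_union, mem_coe]
    rintro e (he | he) f (hf | hf) hef
    · exact hM.2.2 he hf hef
    · exact absurd hef (hc e he f hf)
    · exact absurd hef.symm (hc f hf e he)
    · exact hN.2.2 he hf hef

theorem insert {a b : V} (hM : IsRainbowMatching G c M)
    (hab : G.Adj a b) (hv : ∀ v ∈ s(a, b), ∀ f ∈ M, v ∉ f) (hc : ∀ f ∈ M, c s(a, b) ≠ c f) :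
    IsRainbowMatching G c (insert s(a, b) M) := by
  rw [insert_eq]
  exact (singleton hab).union hM (by simpa using hv) (by simpa using hc)

end IsRainbowMatching

def verts (M : Finset (Sym2 V)) : Finset V := M.biUnion Sym2.toFinset

theorem mem_verts {v : V} : v ∈ verts M ↔ ∃ e ∈ M, v ∈ e := by
  simp [verts]

theorem left_mem_verts (he : s(x, y) ∈ M) : x ∈ verts M :=
  mem_verts.2 ⟨_, he, Sym2.mem_mk_left x y⟩

theorem right_mem_verts (he : s(x, y) ∈ M) : y ∈ verts M :=
  mem_verts.2 ⟨_, he, Sym2.mem_mk_right x y⟩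

theorem IsRainbowMatching.pairwiseDisjoint_toFinset (hM : IsRainbowMatching G c M) :
    (M : Set (Sym2 V)).PairwiseDisjoint Sym2.toFinset :=
  fun e he f hf hef => disjoint_left.2 fun v hve hvf =>
    hM.2.1 e he f hf hef v (Sym2.mem_toFinset.1 hve) (Sym2.mem_toFinset.1 hvf)

theorem IsRainbowMatching.sum_verts {β : Type*} [AddCommMonoid β] (hM : IsRainbowMatching G c M)
    (f : V → β) : ∑ z ∈ verts M, f z = ∑ e ∈ M, ∑ z ∈ e.toFinset, f z :=
  sum_biUnion hM.pairwiseDisjoint_toFinset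

theorem IsRainbowMatching.card_verts (hM : IsRainbowMatching G c M) : #(verts M) = 2 * #M := by
  rw [verts, card_biUnion hM.pairwiseDisjoint_toFinset, sum_const_nat fun e he =>
    Sym2.card_toFinset_of_not_isDiag e (G.not_isDiag_of_mem_edgeSet (hM.1 he)), mul_comm]

namespace IsMaxRainbowMatching

theorem card_le_of_exchange {R A : Finset (Sym2 V)} (hM : IsMaxRainbowMatching G c M)
    (hRM : R ⊆ M) (hA : IsRainbowMatching G c A)
    (hv : ∀ a ∈ A, ∀ v ∈ a, v ∉ verts M ∨ ∃ e ∈ R, v ∈ e)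
    (hc : ∀ a ∈ A, c a ∉ M.image c ∨ ∃ e ∈ R, c a = c e) : #A ≤ #R := by
  have hv' : ∀ e ∈ M \ R, ∀ v ∈ e, ∀ a ∈ A, v ∉ a := by
    intro e he v hve a ha hva
    rw [mem_sdiff] at he
    obtain hfree | ⟨e', he', hve'⟩ := hv a ha v hva
    · exact hfree (mem_verts.2 ⟨e, he.1, hve⟩)
    · exact hM.1.2.1 e' (hRM he') e he.1 (by rintro rfl; exact he.2 he') v hve' hve
  have hc' : ∀ e ∈ M \ R, ∀ a ∈ A, c e ≠ c a := by
    intro e he a ha heq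
    rw [mem_sdiff] at he
    obtain hfresh | ⟨e', he', hce'⟩ := hc a ha
    · exact hfresh (heq ▸ mem_image_of_mem c he.1)
    · exact he.2 (hM.1.2.2 (mem_coe.2 he.1) (mem_coe.2 (hRM he')) (heq.trans hce') ▸ he')
  have hcard := hM.2 _ ((hM.1.mono sdiff_subset).union hA hv' hc')
  rw [card_union_of_disjoint (disjoint_left.2 fun e he he' => hc' e he e he' rfl),
    card_sdiff_of_subset hRM] at hcard
  have := card_le_card hRM
  omega

theorem color_mem_image_of_adj {w w' : V} (hM : IsMaxRainbowMatching G c M)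
    (hw : w ∉ verts M) (hw' : w' ∉ verts M) (hadj : G.Adj w w') : c s(w, w') ∈ M.image c := by
  by_contra hfresh
  have := hM.card_le_of_exchange (empty_subset M) (IsRainbowMatching.singleton hadj)
    (by simp [hw, hw']) (by simp only [mem_singleton, forall_eq]; exact .inl hfresh)
  simp at this

end IsMaxRainbowMatching

end

theorem maxRainbowMatching_degree_bound_lt {m b n : ℕ} (hb : b ≤ m) (hn : 8 * (m + 1) ≤ n) :
    (n - 2 * m) * (m - b) + 2 * (b * (n - 2 * m + (m - b)) + (m - b) * (2 * (m + 3))) +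
      2 * m * (2 * m) < 2 * (m + 1) * n := by
  obtain ⟨d, rfl⟩ := Nat.exists_eq_add_of_le hb
  obtain ⟨u, rfl⟩ := Nat.exists_eq_add_of_le (show 2 * (b + d) ≤ n by omega)
  simp only [Nat.add_sub_cancel_left]
  nlinarith [Nat.mul_le_mul_left d (show 6 * (b + d) + 8 ≤ u by omega)]

section

variable {V : Type*} [Fintype V] [DecidableEq V] {G : SimpleGraph V} [DecidableRel G.Adj]
  {c : Sym2 V → ℕ} {M : Finset (Sym2 V)} {e : Sym2 V} {x y z u w w' : V}

theorem SimpleGraph.sum_degree_eq_of_compl (G : SimpleGraph V) [DecidableRel G.Adj]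
    (s : Finset V) :
    ∑ v, G.degree v = ∑ v ∈ s, #{w ∈ s | G.Adj v w} + 2 * ∑ v ∈ sᶜ, #{w ∈ s | G.Adj v w} +
      ∑ v ∈ sᶜ, #{w ∈ sᶜ | G.Adj v w} := by
  have hdeg : ∀ v, G.degree v = #{w ∈ s | G.Adj v w} + #{w ∈ sᶜ | G.Adj v w} := fun v => by
    rw [← G.card_neighborFinset_eq_degree, G.neighborFinset_eq_filter,
      ← card_union_of_disjoint (disjoint_filter_filter disjoint_compl_right), ← filter_union,
      union_compl]
  have hswap : ∑ v ∈ s, #{w ∈ sᶜ | G.Adj v w} = ∑ v ∈ sᶜ, #{w ∈ s | G.Adj v w} := by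
    simpa [bipartiteAbove, bipartiteBelow, G.adj_comm] using
      sum_card_bipartiteAbove_eq_sum_card_bipartiteBelow (s := s) (t := sᶜ) (r := G.Adj)
  rw [← sum_add_sum_compl s, sum_congr rfl fun v _ => hdeg v, sum_congr rfl fun v _ => hdeg v,
    sum_add_distrib, sum_add_distrib, hswap]
  ring

def freshNeighbors (G : SimpleGraph V) [DecidableRel G.Adj] (c : Sym2 V → ℕ)
    (M : Finset (Sym2 V)) (z : V) : Finset V :=
  {w ∈ (verts M)ᶜ | G.Adj z w ∧ c s(z, w) ∉ M.image c}

/-- The threshold `4` leaves room to pick a fresh neighbour avoiding two given vertices and one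
given color (`IsProperEdgeColoring.exists_mem_freshNeighbors_ne`). -/
def richEdges (G : SimpleGraph V) [DecidableRel G.Adj] (c : Sym2 V → ℕ)
    (M : Finset (Sym2 V)) : Finset (Sym2 V) :=
  {e ∈ M | ∃ x ∈ e.toFinset, 4 ≤ #(freshNeighbors G c M x)}

theorem mem_freshNeighbors :
    w ∈ freshNeighbors G c M z ↔ w ∉ verts M ∧ G.Adj z w ∧ c s(z, w) ∉ M.image c := by
  simp [freshNeighbors]

theorem richEdges_subset : richEdges G c M ⊆ M :=
  filter_subset _ _

theorem mem_richEdges :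
    e ∈ richEdges G c M ↔ e ∈ M ∧ ∃ x ∈ e, 4 ≤ #(freshNeighbors G c M x) := by
  simp [richEdges]

namespace IsProperEdgeColoring

theorem exists_mem_freshNeighbors_ne (hc : IsProperEdgeColoring G c)
    (hx : 4 ≤ #(freshNeighbors G c M x)) (a b : V) (k : ℕ) :
    ∃ u ∈ freshNeighbors G c M x, u ≠ a ∧ u ≠ b ∧ c s(x, u) ≠ k := by
  have hk : #{u ∈ freshNeighbors G c M x | c s(x, u) = k} ≤ #{k} :=
    hc.card_le_card_of_forall_color_mem
      (fun u hu => (mem_freshNeighbors.1 (mem_filter.1 hu).1).2.1)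
      (fun u hu => mem_singleton.2 (mem_filter.1 hu).2)
  obtain ⟨u, hu, hout⟩ := exists_mem_notMem_of_card_lt_card
    (s := {a, b} ∪ {u ∈ freshNeighbors G c M x | c s(x, u) = k}) (t := freshNeighbors G c M x)
    (by have := card_union_le {a, b} {u ∈ freshNeighbors G c M x | c s(x, u) = k}
        have := card_le_two (a := a) (b := b)
        rw [card_singleton] at hk
        omega)
  simp only [mem_union, mem_insert, mem_singleton, mem_filter, not_or] at hout
  exact ⟨u, hu, hout.1.1, hout.1.2, fun h => hout.2 ⟨hu, h⟩⟩

theorem card_filter_adj_le_card_freshNeighbors_add (hc : IsProperEdgeColoring G c) (z : V) :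
    #{w ∈ (verts M)ᶜ | G.Adj z w} ≤ #(freshNeighbors G c M z) + #M := by
  calc #{w ∈ (verts M)ᶜ | G.Adj z w}
      ≤ #(freshNeighbors G c M z ∪ {w ∈ (verts M)ᶜ | G.Adj z w ∧ c s(z, w) ∈ M.image c}) :=
        card_le_card fun w hw => by simp only [freshNeighbors, mem_union, mem_filter] at hw ⊢; tauto
    _ ≤ #(freshNeighbors G c M z) + #(M.image c) :=
        (card_union_le _ _).trans <| Nat.add_le_add_left (hc.card_le_card_of_forall_color_mem
          (s := {w ∈ (verts M)ᶜ | G.Adj z w ∧ c s(z, w) ∈ M.image c})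
          (fun w hw => (mem_filter.1 hw).2.1) fun w hw => (mem_filter.1 hw).2.2) _
    _ ≤ #(freshNeighbors G c M z) + #M := Nat.add_le_add_left card_image_le _

end IsProperEdgeColoring

namespace IsRainbowMatching

theorem card_filter_adj_le_of_forall_color_mem (hM : IsRainbowMatching G c M)
    (hc : IsProperEdgeColoring G c)
    (h : ∀ w ∉ verts M, G.Adj z w → c s(z, w) ∈ M.image c \ (richEdges G c M).image c) :
    #{w ∈ (verts M)ᶜ | G.Adj z w} ≤ #M - #(richEdges G c M) := by
  calc #{w ∈ (verts M)ᶜ | G.Adj z w} ≤ #(M.image c \ (richEdges G c M).image c) :=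
        hc.card_le_card_of_forall_color_mem (fun w hw => (mem_filter.1 hw).2) fun w hw =>
          h w (mem_compl.1 (mem_filter.1 hw).1) (mem_filter.1 hw).2
    _ = #M - #(richEdges G c M) := by
        rw [card_sdiff_of_subset (image_subset_image richEdges_subset),
          card_image_of_injOn hM.2.2,
          card_image_of_injOn (hM.2.2.mono (coe_subset.2 richEdges_subset))]

theorem sum_card_filter_adj_le_of_notMem_richEdges (hM : IsRainbowMatching G c M)
    (hc : IsProperEdgeColoring G c) (he : e ∈ M) (hne : e ∉ richEdges G c M) :
    ∑ z ∈ e.toFinset, #{w ∈ (verts M)ᶜ | G.Adj z w} ≤ 2 * (#M + 3) := by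
  rw [← Sym2.card_toFinset_of_not_isDiag e (G.not_isDiag_of_mem_edgeSet (hM.1 he))]
  refine sum_le_card_nsmul _ _ _ fun z hz =>
    (hc.card_filter_adj_le_card_freshNeighbors_add z).trans ?_
  have : #(freshNeighbors G c M z) < 4 :=
    not_le.1 fun h => hne (mem_richEdges.2 ⟨he, z, Sym2.mem_toFinset.1 hz, h⟩)
  omega

end IsRainbowMatching

namespace IsMaxRainbowMatching

theorem color_eq_of_mem_freshNeighbors (hM : IsMaxRainbowMatching G c M) (he : s(x, y) ∈ M)
    (hu : u ∈ freshNeighbors G c M x) (hw : w ∈ freshNeighbors G c M y) (huw : u ≠ w) :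
    c s(x, u) = c s(y, w) := by
  rw [mem_freshNeighbors] at hu hw
  by_contra hne
  have hxy : x ≠ y := G.ne_of_adj (hM.1.1 he)
  have hxw := ne_of_mem_of_not_mem (left_mem_verts he) hw.1
  have hyu := ne_of_mem_of_not_mem (right_mem_verts he) hu.1
  have hA : IsRainbowMatching G c {s(x, u), s(y, w)} :=
    (IsRainbowMatching.singleton hw.2.1).insert hu.2.1 (by simp [Sym2.mem_iff]; grind)
      (by simpa using hne)
  have := hM.card_le_of_exchange (singleton_subset_iff.2 he) hA
    (by simp [Sym2.mem_iff]; grind)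
    (by simp only [mem_insert, mem_singleton, forall_eq_or_imp, forall_eq]
        exact ⟨.inl hu.2.2, .inl hw.2.2⟩)
  rw [card_pair (ne_of_apply_ne c hne), card_singleton] at this
  omega

theorem card_freshNeighbors_le_two (hM : IsMaxRainbowMatching G c M)
    (hc : IsProperEdgeColoring G c) (he : s(x, y) ∈ M) (hw : w ∈ freshNeighbors G c M y) :
    #(freshNeighbors G c M x) ≤ 2 := by
  have hone : #((freshNeighbors G c M x).erase w) ≤ #{c s(y, w)} :=
    hc.card_le_card_of_forall_color_mem
      (fun u hu => (mem_freshNeighbors.1 (mem_of_mem_erase hu)).2.1)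
      (fun u hu => mem_singleton.2 <|
        hM.color_eq_of_mem_freshNeighbors he (mem_of_mem_erase hu) hw (ne_of_mem_erase hu))
  have := pred_card_le_card_erase (s := freshNeighbors G c M x) (a := w)
  rw [card_singleton] at hone
  omega

theorem color_notMem_image_richEdges_of_adj (hM : IsMaxRainbowMatching G c M)
    (hw : w ∉ verts M) (hw' : w' ∉ verts M) (hadj : G.Adj w w') :
    c s(w, w') ∉ (richEdges G c M).image c := by
  simp only [mem_image, mem_richEdges]
  rintro ⟨_, ⟨he, x, hxe, hx⟩, heq⟩
  obtain ⟨y, rfl⟩ := Sym2.mem_iff_exists.1 hxe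
  obtain ⟨u, hu, huww'⟩ := exists_mem_notMem_of_card_lt_card (s := {w, w'})
    (t := freshNeighbors G c M x) (card_le_two.trans_lt (by omega))
  rw [mem_freshNeighbors] at hu
  simp only [mem_insert, mem_singleton, not_or] at huww'
  have hxw := ne_of_mem_of_not_mem (left_mem_verts he) hw
  have hxw' := ne_of_mem_of_not_mem (left_mem_verts he) hw'
  have hold : c s(w, w') ∈ M.image c := heq ▸ mem_image_of_mem c he
  have hcol : c s(x, u) ≠ c s(w, w') := fun h => hu.2.2 (h ▸ hold)
  have hA : IsRainbowMatching G c {s(x, u), s(w, w')} :=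
    (IsRainbowMatching.singleton hadj).insert hu.2.1 (by simp [Sym2.mem_iff]; grind)
      (by simpa using hcol)
  have := hM.card_le_of_exchange (singleton_subset_iff.2 he) hA
    (by simp [Sym2.mem_iff]; grind)
    (by simp only [mem_insert, mem_singleton, forall_eq_or_imp, forall_eq, exists_eq_left]
        exact ⟨.inl hu.2.2, .inr heq.symm⟩)
  rw [card_pair (ne_of_apply_ne c hcol), card_singleton] at this
  omega

/-- For `f = xy` this is properness at `y`; otherwise exchange `xy` and `f = x'y'` for `xu`, `x'u'`
and `yw`, with fresh neighbours `u` of `x` and `u'` of `x'`. -/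
theorem color_mate_notMem_image_richEdges (hM : IsMaxRainbowMatching G c M)
    (hc : IsProperEdgeColoring G c) (he : s(x, y) ∈ M) (hx : 4 ≤ #(freshNeighbors G c M x))
    (hw : w ∉ verts M) (hyw : G.Adj y w) : c s(y, w) ∉ (richEdges G c M).image c := by
  simp only [mem_image, mem_richEdges]
  rintro ⟨_, ⟨hf, x', hx'f, hx'⟩, heq⟩
  obtain ⟨y', rfl⟩ := Sym2.mem_iff_exists.1 hx'f
  by_cases hfe : s(x', y') = s(x, y)
  · rw [hfe] at heq
    exact hc _ hyw _ (hM.1.1 he) (fun h => hw (mem_verts.2 ⟨_, he, h ▸ Sym2.mem_mk_right y w⟩))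
      ⟨y, Sym2.mem_mk_left _ _, Sym2.mem_mk_right _ _⟩ heq.symm
  obtain ⟨u, hu, huw⟩ := exists_mem_notMem_of_card_lt_card (s := {w})
    (t := freshNeighbors G c M x) (by rw [card_singleton]; omega)
  rw [mem_singleton] at huw
  obtain ⟨u', hu', hu'w, hu'u, hcol⟩ := hc.exists_mem_freshNeighbors_ne hx' w u (c s(x, u))
  rw [mem_freshNeighbors] at hu hu'
  have hdisj := hM.1.2.1 _ he _ hf (Ne.symm hfe)
  have hxx' : x ≠ x' := fun h => hdisj x (Sym2.mem_mk_left x y) (h ▸ Sym2.mem_mk_left x' y')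
  have hyx' : y ≠ x' := fun h => hdisj y (Sym2.mem_mk_right x y) (h ▸ Sym2.mem_mk_left x' y')
  have hxy := G.ne_of_adj (hM.1.1 he)
  have := left_mem_verts he
  have := right_mem_verts he
  have := left_mem_verts hf
  have hold : c s(y, w) ∈ M.image c := heq ▸ mem_image_of_mem c hf
  have hcol' : c s(x', u') ≠ c s(y, w) := fun h => hu'.2.2 (h ▸ hold)
  have hcol'' : c s(x, u) ≠ c s(y, w) := fun h => hu.2.2 (h ▸ hold)
  have hA : IsRainbowMatching G c {s(x, u), s(x', u'), s(y, w)} :=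
    ((IsRainbowMatching.singleton hyw).insert hu'.2.1 (by simp [Sym2.mem_iff]; grind)
      (by simpa using hcol')).insert hu.2.1
      (by simp [Sym2.mem_iff]; grind) (by simpa using ⟨hcol.symm, hcol''⟩)
  have := hM.card_le_of_exchange (R := {s(x, y), s(x', y')}) (by simp [insert_subset_iff, he, hf])
    hA (by simp [Sym2.mem_iff]; grind)
    (by simp only [mem_insert, mem_singleton, forall_eq_or_imp, forall_eq, exists_eq_or_imp,
          exists_eq_left]
        exact ⟨.inl hu.2.2, .inl hu'.2.2, .inr (.inr heq.symm)⟩)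
  rw [card_insert_of_notMem (by
      simp only [mem_insert, mem_singleton, not_or]
      exact ⟨ne_of_apply_ne c hcol.symm, ne_of_apply_ne c hcol''⟩),
    card_pair (ne_of_apply_ne c hcol'), card_pair (Ne.symm hfe)] at this
  omega

theorem card_filter_adj_le_of_notMem_verts (hM : IsMaxRainbowMatching G c M)
    (hc : IsProperEdgeColoring G c) (hz : z ∉ verts M) :
    #{w ∈ (verts M)ᶜ | G.Adj z w} ≤ #M - #(richEdges G c M) :=
  hM.1.card_filter_adj_le_of_forall_color_mem hc fun _ hw hadj => mem_sdiff.2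
    ⟨hM.color_mem_image_of_adj hz hw hadj, hM.color_notMem_image_richEdges_of_adj hz hw hadj⟩

theorem sum_card_filter_adj_le_of_mem_richEdges (hM : IsMaxRainbowMatching G c M)
    (hc : IsProperEdgeColoring G c) (he : e ∈ richEdges G c M) :
    ∑ z ∈ e.toFinset, #{w ∈ (verts M)ᶜ | G.Adj z w} ≤
      #(verts M)ᶜ + (#M - #(richEdges G c M)) := by
  obtain ⟨heM, x, hxe, hx⟩ := mem_richEdges.1 he
  obtain ⟨y, rfl⟩ := Sym2.mem_iff_exists.1 hxe
  have hy : #{w ∈ (verts M)ᶜ | G.Adj y w} ≤ #M - #(richEdges G c M) := by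
    refine hM.1.card_filter_adj_le_of_forall_color_mem hc fun w hw hadj => mem_sdiff.2 ⟨?_,
      hM.color_mate_notMem_image_richEdges hc heM hx hw hadj⟩
    by_contra hfresh
    have := hM.card_freshNeighbors_le_two hc heM (mem_freshNeighbors.2 ⟨hw, hadj, hfresh⟩)
    omega
  rw [Sym2.toFinset_mk_eq, sum_pair (G.ne_of_adj (hM.1.1 heM))]
  exact add_le_add (card_le_card (filter_subset _ _)) hy

theorem sum_verts_card_filter_adj_le (hM : IsMaxRainbowMatching G c M)
    (hc : IsProperEdgeColoring G c) :
    ∑ z ∈ verts M, #{w ∈ (verts M)ᶜ | G.Adj z w} ≤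
      #(richEdges G c M) * (#(verts M)ᶜ + (#M - #(richEdges G c M))) +
        (#M - #(richEdges G c M)) * (2 * (#M + 3)) := by
  have hrich : {e ∈ M | e ∈ richEdges G c M} = richEdges G c M :=
    filter_mem_eq_inter.trans (inter_eq_right.2 richEdges_subset)
  have hpoor : #{e ∈ M | e ∉ richEdges G c M} = #M - #(richEdges G c M) := by
    have := card_filter_add_card_filter_not (s := M) (p := (· ∈ richEdges G c M))
    rw [hrich] at this
    omega
  rw [hM.1.sum_verts, ← sum_filter_add_sum_filter_not M (· ∈ richEdges G c M), hrich]
  refine add_le_add ?_ ?_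
  · simpa using sum_le_card_nsmul _ _ _ fun e he =>
      hM.sum_card_filter_adj_le_of_mem_richEdges hc he
  · simpa [hpoor] using sum_le_card_nsmul _ _ _ fun e he =>
      hM.1.sum_card_filter_adj_le_of_notMem_richEdges hc (mem_filter.1 he).1 (mem_filter.1 he).2

theorem sum_degree_lt (hM : IsMaxRainbowMatching G c M) (hc : IsProperEdgeColoring G c)
    (hn : 8 * (#M + 1) ≤ Fintype.card V) :
    ∑ v, G.degree v < 2 * (#M + 1) * Fintype.card V := by
  refine lt_of_le_of_lt ?_ (maxRainbowMatching_degree_bound_lt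
    (card_le_card (richEdges_subset (G := G) (c := c))) hn)
  have hU : #(verts M)ᶜ = Fintype.card V - 2 * #M := by rw [card_compl, hM.1.card_verts]
  rw [G.sum_degree_eq_of_compl (verts M)ᶜ, compl_compl, ← hU, ← hM.1.card_verts]
  gcongr ?_ + 2 * ?_ + ?_
  · simpa using sum_le_card_nsmul _ _ _ fun v hv =>
      hM.card_filter_adj_le_of_notMem_verts hc (mem_compl.1 hv)
  · exact hM.sum_verts_card_filter_adj_le hc
  · simpa using sum_le_card_nsmul _ _ _ fun v _ => card_filter_le (verts M) (G.Adj v)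

end IsMaxRainbowMatching

end

theorem rainbow_matching_properly_colored_avg_color_degree_general
    {V : Type*} [Fintype V] (k : ℕ)
    (G : SimpleGraph V) (c : Sym2 V → ℕ)
    (hproper : ∀ e ∈ G.edgeSet, ∀ f ∈ G.edgeSet, e ≠ f → (∃ v : V, v ∈ e ∧ v ∈ f) →
      c e ≠ c f)
    (hn : 8 * k ≤ Fintype.card V)
    (havg : (2 * (k : ℚ)) ≤ (∑ v, (colorDegree G c v : ℚ)) / (Fintype.card V : ℚ)) :
    ∃ M : Finset (Sym2 V), IsRainbowMatching G c M ∧ M.card = k := by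
  classical
  have hc : IsProperEdgeColoring G c := hproper
  obtain ⟨M, hM⟩ := exists_isMaxRainbowMatching G c
  by_contra hnone
  have hMk : #M < k := by
    by_contra! hle
    obtain ⟨N, hNM, hN⟩ := exists_subset_card_eq hle
    exact hnone ⟨N, hM.1.mono hNM, hN⟩
  have hsum : 2 * k * Fintype.card V ≤ ∑ v, G.degree v := by
    rw [le_div_iff₀ (by norm_cast; omega)] at havg
    simp only [hc.colorDegree_eq_degree] at havg
    exact_mod_cast havg
  have := hM.sum_degree_lt hc (by omega)
  have := Nat.mul_le_mul_right (Fintype.card V) (show 2 * (#M + 1) ≤ 2 * k by omega)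
  omega

/-- Kritschgau: every properly edge-colored graph on at least `8k` vertices with average
color degree at least `2k` contains a rainbow matching of size `k`. -/
theorem rainbow_matching_properly_colored_avg_color_degree
    {V : Type*} [Fintype V] (k : ℕ) (hk : 1 ≤ k)
    (G : SimpleGraph V) (c : Sym2 V → ℕ)
    (hproper : ∀ e ∈ G.edgeSet, ∀ f ∈ G.edgeSet, e ≠ f → (∃ v : V, v ∈ e ∧ v ∈ f) →
      c e ≠ c f)
    (hn : 8 * k ≤ Fintype.card V)
    (havg : (2 * (k : ℚ)) ≤ (∑ v, (colorDegree G c v : ℚ)) / (Fintype.card V : ℚ)) :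
    ∃ M : Finset (Sym2 V), IsRainbowMatching G c M ∧ M.card = k :=
  rainbow_matching_properly_colored_avg_color_degree_general k G c hproper hn havg
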